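/- arXiv:2405.07697 — 2 statements merged into one kernel-verified Lean document; each statement's English description precedes it below -/
import Mathlib

section
/- Weight distribution of the side information over a decision region: let n ≥ 1, p ∈ [0,1], and let C ⊆ {0,1}^n be a nonempty finite set with N = |C| and weight enumerator E_γ = |{x ∈ C : w(x) = γ}| for γ ∈ {0,…,n}. Let X be uniformly distributed on C and let E, independent of X, have i.i.d. Bernoulli(p) entries; set Y = X ⊕ E. Then for every ν ∈ {0,…,n}, P(w(Y) = ν) = (1/N) · Σ_{γ=0}^{n} E_γ Σ_{j=0}^{n} Γ_{ν,j,γ} · p^j (1−p)^{n−j}. -/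
open MeasureTheory Finset

/-- `Γ_{λ,j,γ}` (for ambient length `n`): equals `C(γ,u)·C(n−γ,λ−u)` when
`γ+λ−j = 2u` for a nonnegative integer `u` with `u ≤ min(γ,λ)` and `λ−u ≤ n−γ`,
and `0` otherwise (in particular whenever `γ+λ−j` is odd or negative). -/
def Gamma (n lam j gam : ℕ) : ℕ :=
  if j ≤ gam + lam ∧ (gam + lam - j) % 2 = 0 ∧ (gam + lam - j) / 2 ≤ min gam lam
      ∧ lam - (gam + lam - j) / 2 ≤ n - gam then
    gam.choose ((gam + lam - j) / 2) * (n - gam).choose (lam - (gam + lam - j) / 2)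
  else 0

lemma zmod2_cases (x : ZMod 2) : x = 0 ∨ x = 1 := by fin_cases x <;> [exact Or.inl rfl; exact Or.inr rfl]

lemma countA (n : ℕ) (s : Finset (Fin n)) (a b : ℕ) :
    ((univ : Finset (Finset (Fin n))).filter
      (fun T => (T ∩ s).card = a ∧ (T \ s).card = b)).card
    = s.card.choose a * sᶜ.card.choose b := by
  rw [← card_powersetCard, ← card_powersetCard, ← card_product]
  apply card_bij (fun T _ => (T ∩ s, T \ s))
  · intro T hT
    simp only [mem_filter, mem_univ, true_and] at hT
    simp only [mem_product, mem_powersetCard]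
    exact ⟨⟨inter_subset_right, hT.1⟩, ⟨fun x hx => by simp [mem_sdiff.1 hx], hT.2⟩⟩
  · intro T₁ h₁ T₂ h₂ h
    have h1 := congrArg Prod.fst h
    have h2 := congrArg Prod.snd h
    simp only at h1 h2
    have : ∀ T : Finset (Fin n), (T ∩ s) ∪ (T \ s) = T := fun T => by
      ext i; simp [mem_inter, mem_sdiff]; tauto
    rw [← this T₁, ← this T₂, h1, h2]
  · rintro ⟨A, B⟩ hAB
    simp only [mem_product, mem_powersetCard] at hAB
    obtain ⟨⟨hAs, hAc⟩, ⟨hBs, hBc⟩⟩ := hAB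
    have hB : ∀ i ∈ B, i ∉ s := fun i hi => by simpa using hBs hi
    have e1 : (A ∪ B) ∩ s = A := by
      ext i; simp only [mem_inter, mem_union]
      constructor
      · rintro ⟨h1 | h1, h2⟩
        · exact h1
        · exact absurd h2 (hB i h1)
      · intro h; exact ⟨Or.inl h, hAs h⟩
    have e2 : (A ∪ B) \ s = B := by
      ext i; simp only [mem_sdiff, mem_union]
      constructor
      · rintro ⟨h1 | h1, h2⟩
        · exact absurd (hAs h1) h2
        · exact h1
      · intro h; exact ⟨Or.inr h, hB i h⟩
    exact ⟨A ∪ B, by simp [e1, e2, hAc, hBc], by simp [e1, e2]⟩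

lemma countB (n ν j γ : ℕ) (s : Finset (Fin n)) (hs : s.card = γ) :
    ((univ : Finset (Finset (Fin n))).filter
      (fun T => T.card = j ∧ (s \ T).card + (T \ s).card = ν)).card = Gamma n ν j γ := by
  have hγn : γ ≤ n := by
    rw [← hs]; simpa using card_le_univ s
  have hbound : ∀ T : Finset (Fin n),
      (T ∩ s).card + (T \ s).card = T.card ∧ (s \ T).card + (T ∩ s).card = γ
        ∧ (T ∩ s).card ≤ γ ∧ (T \ s).card ≤ n - γ := by
    intro T
    refine ⟨card_inter_add_card_sdiff T s, ?_, ?_, ?_⟩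
    · rw [inter_comm]; rw [← hs]; exact card_sdiff_add_card_inter s T
    · rw [← hs]; exact card_le_card inter_subset_right
    · have h1 : T \ s ⊆ sᶜ := fun i hi => by simp [mem_sdiff.1 hi]
      have := card_le_card h1
      rwa [card_compl, Fintype.card_fin, hs] at this
  unfold Gamma
  by_cases hcond : j ≤ γ + ν ∧ (γ + ν - j) % 2 = 0 ∧ (γ + ν - j) / 2 ≤ min γ ν
      ∧ ν - (γ + ν - j) / 2 ≤ n - γ
  · rw [if_pos hcond]
    have key : ∀ T ∈ (univ : Finset (Finset (Fin n))),
        (T.card = j ∧ (s \ T).card + (T \ s).card = ν) ↔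
        ((T ∩ s).card = γ - (γ + ν - j) / 2 ∧ (T \ s).card = ν - (γ + ν - j) / 2) := by
      intro T _
      obtain ⟨h1, h2, h3, h4⟩ := hbound T
      omega
    rw [filter_congr key, countA, hs, card_compl, Fintype.card_fin, hs]
    have hu : (γ + ν - j) / 2 ≤ γ := le_trans hcond.2.2.1 (min_le_left _ _)
    rw [Nat.choose_symm hu]
  · rw [if_neg hcond, card_eq_zero, filter_eq_empty_iff]
    intro T _
    obtain ⟨h1, h2, h3, h4⟩ := hbound T
    omega

def supp {n : ℕ} (e : Fin n → ZMod 2) : Finset (Fin n) := univ.filter (fun i => e i = 1)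

lemma hammingNorm_eq_supp {n : ℕ} (e : Fin n → ZMod 2) : hammingNorm e = (supp e).card := by
  unfold hammingNorm supp
  congr 1
  apply filter_congr
  intro i _
  rcases zmod2_cases (e i) with h | h <;> simp [h]

lemma supp_inj {n : ℕ} (e₁ e₂ : Fin n → ZMod 2) (h : supp e₁ = supp e₂) : e₁ = e₂ := by
  funext i
  have : (i ∈ supp e₁) = (i ∈ supp e₂) := by rw [h]
  simp only [supp, mem_filter, mem_univ, true_and] at this
  rcases zmod2_cases (e₁ i) with h1 | h1 <;> rcases zmod2_cases (e₂ i) with h2 | h2 <;>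
    simp [h1, h2] at this ⊢

lemma supp_surj {n : ℕ} (T : Finset (Fin n)) :
    supp (fun i => if i ∈ T then (1 : ZMod 2) else 0) = T := by
  ext i
  simp only [supp, mem_filter, mem_univ, true_and]
  by_cases h : i ∈ T <;> simp [h]

lemma hammingNorm_add_eq {n : ℕ} (x e : Fin n → ZMod 2) :
    hammingNorm (x + e) = (supp x \ supp e).card + (supp e \ supp x).card := by
  rw [← card_union_of_disjoint (disjoint_sdiff_sdiff)]
  unfold hammingNorm
  congr 1
  ext i
  simp only [mem_filter, mem_univ, true_and, mem_union, mem_sdiff, supp, Pi.add_apply]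
  rcases zmod2_cases (x i) with h1 | h1 <;> rcases zmod2_cases (e i) with h2 | h2 <;>
    simp [h1, h2, show (1:ZMod 2)+1 = 0 by decide]

lemma countE (n ν j : ℕ) (x : Fin n → ZMod 2) :
    ((univ : Finset (Fin n → ZMod 2)).filter
      (fun e => hammingNorm e = j ∧ hammingNorm (x + e) = ν)).card
    = Gamma n ν j (hammingNorm x) := by
  rw [← countB n ν j (hammingNorm x) (supp x) (hammingNorm_eq_supp x).symm]
  apply card_bij (fun e _ => supp e)
  · intro e he
    simp only [mem_filter, mem_univ, true_and] at he ⊢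
    rw [← hammingNorm_eq_supp, ← hammingNorm_add_eq]
    exact he
  · intro e₁ _ e₂ _ h
    exact supp_inj _ _ h
  · intro T hT
    simp only [mem_filter, mem_univ, true_and] at hT
    refine ⟨fun i => if i ∈ T then 1 else 0, ?_, supp_surj T⟩
    simp only [mem_filter, mem_univ, true_and]
    rw [hammingNorm_eq_supp, hammingNorm_add_eq, supp_surj]
    exact hT

lemma hammingNorm_le_n {n : ℕ} (e : Fin n → ZMod 2) : hammingNorm e ≤ n := by
  rw [hammingNorm_eq_supp]
  simpa using card_le_univ (supp e)


/-- weight distribution of the side information over a decision region.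
If `X` is uniform on a nonempty set `C ⊆ {0,1}^n` with `N = |C|` and weight enumerator
`E_γ`, `E` is independent of `X` with i.i.d. Bernoulli(p) entries, and `Y = X ⊕ E`,
then `P(w(Y) = ν) = (1/N) ∑_{γ=0}^{n} E_γ ∑_{j=0}^{n} Γ_{ν,j,γ} p^j (1-p)^{n-j}`. -/
theorem weight_distribution_over_decision_region
    (n : ℕ) (hn : 1 ≤ n) (p : ℝ) (hp0 : 0 ≤ p) (hp1 : p ≤ 1)
    (C : Finset (Fin n → ZMod 2)) (hC : C.Nonempty)
    {Ω : Type*} [MeasurableSpace Ω] (ℙ : Measure Ω) [IsProbabilityMeasure ℙ]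
    (X E : Ω → (Fin n → ZMod 2))
    (hXm : ∀ x : Fin n → ZMod 2, MeasurableSet {ω | X ω = x})
    (hEm : ∀ e : Fin n → ZMod 2, MeasurableSet {ω | E ω = e})
    -- X is uniformly distributed on C
    (hXunif : ∀ x : Fin n → ZMod 2,
      (ℙ {ω | X ω = x}).toReal = if x ∈ C then 1 / (C.card : ℝ) else 0)
    -- E has i.i.d. Bernoulli(p) entries
    (hEdist : ∀ e : Fin n → ZMod 2,
      (ℙ {ω | E ω = e}).toReal = ∏ i : Fin n, (if e i = 1 then p else 1 - p))
    -- X and E are independent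
    (hindep : ∀ x e : Fin n → ZMod 2,
      (ℙ {ω | X ω = x ∧ E ω = e}).toReal
        = (ℙ {ω | X ω = x}).toReal * (ℙ {ω | E ω = e}).toReal) :
    ∀ ν : ℕ, ν ≤ n →
      (ℙ {ω | hammingNorm (X ω + E ω) = ν}).toReal
        = (1 / (C.card : ℝ)) *
            ∑ γ ∈ Finset.range (n + 1),
              ((C.filter (fun x => hammingNorm x = γ)).card : ℝ) *
                ∑ j ∈ Finset.range (n + 1),
                  (Gamma n ν j γ : ℝ) * p ^ j * (1 - p) ^ (n - j) := by
  intro ν hν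
  classical
  set S : Finset ((Fin n → ZMod 2) × (Fin n → ZMod 2)) :=
    univ.filter (fun q => hammingNorm (q.1 + q.2) = ν) with hS
  have hset : {ω | hammingNorm (X ω + E ω) = ν}
      = ⋃ q ∈ S, {ω | X ω = q.1 ∧ E ω = q.2} := by
    ext ω
    simp only [Set.mem_setOf_eq, Set.mem_iUnion, hS, mem_filter, mem_univ, true_and]
    constructor
    · intro h
      exact ⟨(X ω, E ω), h, rfl, rfl⟩
    · rintro ⟨q, hq, h1, h2⟩
      rw [h1, h2]; exact hq
  have hmeas : ∀ q : (Fin n → ZMod 2) × (Fin n → ZMod 2),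
      MeasurableSet {ω | X ω = q.1 ∧ E ω = q.2} := by
    intro q
    have : {ω | X ω = q.1 ∧ E ω = q.2} = {ω | X ω = q.1} ∩ {ω | E ω = q.2} := rfl
    rw [this]; exact (hXm q.1).inter (hEm q.2)
  have hdisj : (↑S : Set ((Fin n → ZMod 2) × (Fin n → ZMod 2))).PairwiseDisjoint
      (fun q => {ω | X ω = q.1 ∧ E ω = q.2}) := by
    intro q1 _ q2 _ hne
    apply Set.disjoint_left.2
    rintro ω ⟨h1, h2⟩ ⟨h3, h4⟩
    exact hne (Prod.ext (h1.symm.trans h3) (h2.symm.trans h4))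
  have hsum : (ℙ {ω | hammingNorm (X ω + E ω) = ν}).toReal
      = ∑ q ∈ S, (ℙ {ω | X ω = q.1}).toReal * (ℙ {ω | E ω = q.2}).toReal := by
    rw [hset, measure_biUnion_finset hdisj (fun q _ => hmeas q),
      ENNReal.toReal_sum (fun q _ => measure_ne_top ℙ _)]
    exact Finset.sum_congr rfl (fun q _ => hindep q.1 q.2)
  set G : (Fin n → ZMod 2) → ℝ :=
    fun e => p ^ hammingNorm e * (1 - p) ^ (n - hammingNorm e) with hG
  have hprod : ∀ e : Fin n → ZMod 2,
      (∏ i : Fin n, (if e i = 1 then p else 1 - p)) = G e := by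
    intro e
    rw [Finset.prod_ite (fun _ => p) (fun _ => 1 - p), prod_const, prod_const]
    have h1 : (univ.filter (fun i => e i = 1)).card = hammingNorm e :=
      (hammingNorm_eq_supp e).symm
    have h2 : (univ.filter (fun i => ¬ e i = 1)).card = n - hammingNorm e := by
      have h3 := card_filter_add_card_filter_not
        (s := (univ : Finset (Fin n))) (p := fun i => e i = 1)
      rw [card_univ, Fintype.card_fin] at h3
      omega
    rw [h1, h2]
  have hinner : ∀ x : Fin n → ZMod 2,
      ∑ e ∈ univ.filter (fun e => hammingNorm (x + e) = ν), G e
      = ∑ j ∈ Finset.range (n + 1),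
          (Gamma n ν j (hammingNorm x) : ℝ) * p ^ j * (1 - p) ^ (n - j) := by
    intro x
    rw [← sum_fiberwise_of_maps_to (g := fun e => hammingNorm e)
      (t := Finset.range (n + 1))
      (fun e _ => Finset.mem_range.2 (Nat.lt_succ_of_le (hammingNorm_le_n e))) G]
    apply Finset.sum_congr rfl
    intro j hj
    rw [filter_filter]
    have hcongr : ∀ e ∈ univ.filter
        (fun e => hammingNorm (x + e) = ν ∧ hammingNorm e = j),
        G e = p ^ j * (1 - p) ^ (n - j) := by
      intro e he
      simp only [mem_filter, mem_univ, true_and] at he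
      rw [hG]; simp only [he.2]
    rw [Finset.sum_congr rfl hcongr, sum_const, nsmul_eq_mul]
    have hcard : (univ.filter
        (fun e => hammingNorm (x + e) = ν ∧ hammingNorm e = j)).card
        = Gamma n ν j (hammingNorm x) := by
      rw [← countE n ν j x]
      congr 1
      apply filter_congr
      intro e _
      exact and_comm
    rw [hcard, mul_assoc]
  rw [hsum]
  calc ∑ q ∈ S, (ℙ {ω | X ω = q.1}).toReal * (ℙ {ω | E ω = q.2}).toReal
      = ∑ q ∈ S, (if q.1 ∈ C then 1 / (C.card : ℝ) else 0) * G q.2 := by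
        exact Finset.sum_congr rfl (fun q _ => by rw [hXunif, hEdist, hprod])
    _ = ∑ x : Fin n → ZMod 2, ∑ e : Fin n → ZMod 2,
          if hammingNorm (x + e) = ν then
            (if x ∈ C then 1 / (C.card : ℝ) else 0) * G e else 0 := by
        rw [hS, sum_filter, Fintype.sum_prod_type]
    _ = ∑ x ∈ C, (1 / (C.card : ℝ)) *
          ∑ e ∈ univ.filter (fun e => hammingNorm (x + e) = ν), G e := by
        have step : ∀ x : Fin n → ZMod 2,
            (∑ e : Fin n → ZMod 2, if hammingNorm (x + e) = ν then
              (if x ∈ C then 1 / (C.card : ℝ) else 0) * G e else 0)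
            = if x ∈ C then (1 / (C.card : ℝ)) *
                ∑ e ∈ univ.filter (fun e => hammingNorm (x + e) = ν), G e else 0 := by
          intro x
          by_cases hx : x ∈ C
          · simp only [hx, if_true]
            rw [mul_sum, sum_filter]
          · simp [hx]
        rw [Finset.sum_congr rfl (fun x _ => step x), Finset.sum_ite_mem,
          Finset.univ_inter]
    _ = (1 / (C.card : ℝ)) * ∑ x ∈ C,
          ∑ j ∈ Finset.range (n + 1),
            (Gamma n ν j (hammingNorm x) : ℝ) * p ^ j * (1 - p) ^ (n - j) := by
        rw [← mul_sum]
        exact congrArg _ (Finset.sum_congr rfl (fun x _ => hinner x))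
    _ = (1 / (C.card : ℝ)) *
          ∑ γ ∈ Finset.range (n + 1),
            ((C.filter (fun x => hammingNorm x = γ)).card : ℝ) *
              ∑ j ∈ Finset.range (n + 1),
                (Gamma n ν j γ : ℝ) * p ^ j * (1 - p) ^ (n - j) := by
        congr 1
        rw [← sum_fiberwise_of_maps_to (g := fun x => hammingNorm x)
          (t := Finset.range (n + 1))
          (fun x _ => Finset.mem_range.2 (Nat.lt_succ_of_le (hammingNorm_le_n x)))]
        apply Finset.sum_congr rfl
        intro γ hγ
        have : ∀ x ∈ C.filter (fun x => hammingNorm x = γ),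
            (∑ j ∈ Finset.range (n + 1),
              (Gamma n ν j (hammingNorm x) : ℝ) * p ^ j * (1 - p) ^ (n - j))
            = ∑ j ∈ Finset.range (n + 1),
              (Gamma n ν j γ : ℝ) * p ^ j * (1 - p) ^ (n - j) := by
          intro x hx
          simp only [mem_filter] at hx
          rw [hx.2]
        rw [Finset.sum_congr rfl this, sum_const, nsmul_eq_mul]
end

section
/- Proposition 1 (error probabilities of the quantization scheme): let n ≥ 1, λ_q ∈ ℕ, and 0 ≤ p0, p1 ≤ 1. Let C_0^{(q)} ⊆ {0,1}^n be a nonempty set (the decision region of the all-zero quantizer codeword) with N_0^{(q)} = |C_0^{(q)}| and weight enumerator E_γ^{(q)} = |{x ∈ C_0^{(q)} : w(x) = γ}|, all weights being at most d_max^{(q)}. Conditioned on the all-zero codeword being transmitted, X is uniform on C_0^{(q)}, E is independent of X with i.i.d. Bernoulli(δ) entries, Y = X ⊕ E, and the decoder decides H0 if and only if w(Y) ≤ λ_q. Then: (i) with δ = p0, the Type-I error satisfies α_n^{(q)} = P(w(Y) > λ_q) = 1 − (1/N_0^{(q)}) Σ_{λ=0}^{λ_q} Σ_{γ=0}^{d_max^{(q)}}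 Σ_{j=0}^{n} E_γ^{(q)} Γ_{λ,j,γ} p0^j (1−p0)^{n−j}; (ii) with δ = p1, the Type-II error satisfies β_n^{(q)} = P(w(Y) ≤ λ_q) = (1/N_0^{(q)}) Σ_{λ=0}^{λ_q} Σ_{γ=0}^{d_max^{(q)}} Σ_{j=0}^{n} E_γ^{(q)} Γ_{λ,j,γ} p1^j (1−p1)^{n−j}. -/
open MeasureTheory Finset

lemma zmod2_add (a b : ZMod 2) : a + b ≠ 0 ↔ ((a ≠ 0 ∧ ¬ b ≠ 0) ∨ (¬ a ≠ 0 ∧ b ≠ 0)) := by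
  revert a b; decide

lemma hn_le (n : ℕ) (x : Fin n → ZMod 2) : hammingNorm x ≤ n := by
  simpa [hammingNorm] using Finset.card_filter_le Finset.univ (fun i => x i ≠ 0)

section pere
variable {n : ℕ} (x e : Fin n → ZMod 2)

lemma hn_split :
    hammingNorm e
      = ((Finset.univ.filter (fun i => x i ≠ 0)).filter (fun i => e i ≠ 0)).card
        + ((Finset.univ.filter (fun i => x i ≠ 0))ᶜ.filter (fun i => e i ≠ 0)).card := by
  rw [hammingNorm, ← Finset.card_union_of_disjoint
    (Finset.disjoint_filter_filter disjoint_compl_right), ← Finset.filter_union,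
    Finset.union_compl]

lemma hn_add_split :
    hammingNorm (x + e)
      = ((Finset.univ.filter (fun i => x i ≠ 0)).filter (fun i => ¬ e i ≠ 0)).card
        + ((Finset.univ.filter (fun i => x i ≠ 0))ᶜ.filter (fun i => e i ≠ 0)).card := by
  rw [hammingNorm, ← Finset.card_union_of_disjoint
    (Finset.disjoint_filter_filter disjoint_compl_right)]
  congr 1
  ext i
  simp only [Finset.mem_filter, Finset.mem_union, Finset.mem_compl, Finset.mem_univ,
    true_and, Pi.add_apply]
  exact (zmod2_add (x i) (e i)).trans (by tauto)

end pere

lemma count_lemma {n : ℕ} (lam j γ : ℕ) (x : Fin n → ZMod 2) (hx : hammingNorm x = γ) :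
    ((Finset.univ : Finset (Fin n → ZMod 2)).filter
        (fun e => hammingNorm (x + e) = lam ∧ hammingNorm e = j)).card
      = Gamma n lam j γ := by
  classical
  set S : Finset (Fin n) := Finset.univ.filter (fun i => x i ≠ 0) with hSdef
  have hS : S.card = γ := hx
  have hSc : Sᶜ.card = n - γ := by
    rw [Finset.card_compl, hS]; simp
  set T := (S.powerset ×ˢ Sᶜ.powerset).filter
      (fun AB => γ - AB.1.card + AB.2.card = lam ∧ AB.1.card + AB.2.card = j) with hT
  have hfilt : ∀ e : Fin n → ZMod 2,
      (S.filter (fun i => ¬ e i ≠ 0)).card = γ - (S.filter (fun i => e i ≠ 0)).card := by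
    intro e
    have := Finset.card_filter_add_card_filter_not (s := S) (fun i => e i ≠ 0)
    omega
  have key : ∀ A B : Finset (Fin n), A ⊆ S → B ⊆ Sᶜ →
      (S.filter (fun i => (if i ∈ A ∪ B then (1 : ZMod 2) else 0) ≠ 0) = A
        ∧ Sᶜ.filter (fun i => (if i ∈ A ∪ B then (1 : ZMod 2) else 0) ≠ 0) = B) := by
    intro A B hA hB
    have hne : ∀ i, (if i ∈ A ∪ B then (1 : ZMod 2) else 0) ≠ 0 ↔ i ∈ A ∪ B := by
      intro i; split <;> simp_all
    constructor
    · ext i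
      simp only [Finset.mem_filter, hne]
      constructor
      · rintro ⟨hiS, hi⟩
        rcases Finset.mem_union.mp hi with hi | hi
        · exact hi
        · exact absurd hiS (by simpa using (Finset.mem_compl.mp (hB hi)))
      · intro hi; exact ⟨hA hi, Finset.mem_union_left _ hi⟩
    · ext i
      simp only [Finset.mem_filter, hne]
      constructor
      · rintro ⟨hiS, hi⟩
        rcases Finset.mem_union.mp hi with hi | hi
        · exact absurd (hA hi) (by simpa using hiS)
        · exact hi
      · intro hi; exact ⟨hB hi, Finset.mem_union_right _ hi⟩
  have step1 : ((Finset.univ : Finset (Fin n → ZMod 2)).filter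
        (fun e => hammingNorm (x + e) = lam ∧ hammingNorm e = j)).card = T.card := by
    apply Finset.card_nbij'
      (fun e => (S.filter (fun i => e i ≠ 0), Sᶜ.filter (fun i => e i ≠ 0)))
      (fun AB => fun i => if i ∈ AB.1 ∪ AB.2 then 1 else 0)
    · intro e he
      simp only [Finset.mem_coe, Finset.mem_filter, Finset.mem_univ, true_and] at he
      simp only [Finset.mem_coe, hT, Finset.mem_filter, Finset.mem_product, Finset.mem_powerset]
      refine ⟨⟨Finset.filter_subset _ _, Finset.filter_subset _ _⟩, ?_, ?_⟩
      · rw [← hfilt e]; rw [hn_add_split x e] at he; exact he.1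
      · rw [hn_split x e] at he; exact he.2
    · rintro ⟨A, B⟩ hAB
      simp only [Finset.mem_coe, hT, Finset.mem_filter, Finset.mem_product, Finset.mem_powerset] at hAB
      obtain ⟨⟨hA, hB⟩, h1, h2⟩ := hAB
      obtain ⟨hAe, hBe⟩ := key A B hA hB
      set e : Fin n → ZMod 2 := fun i => if i ∈ A ∪ B then 1 else 0 with hedef
      simp only [Finset.mem_coe, Finset.mem_filter, Finset.mem_univ, true_and]
      constructor
      · rw [hn_add_split x e, hfilt e]
        show γ - (S.filter (fun i => (if i ∈ A ∪ B then (1:ZMod 2) else 0) ≠ 0)).card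
          + (Sᶜ.filter (fun i => (if i ∈ A ∪ B then (1:ZMod 2) else 0) ≠ 0)).card = lam
        rw [hAe, hBe]; exact h1
      · rw [hn_split x e]
        show (S.filter (fun i => (if i ∈ A ∪ B then (1:ZMod 2) else 0) ≠ 0)).card
          + (Sᶜ.filter (fun i => (if i ∈ A ∪ B then (1:ZMod 2) else 0) ≠ 0)).card = j
        rw [hAe, hBe]; exact h2
    · intro e _
      funext i
      by_cases h : e i ≠ 0
      · have h1 : e i = 1 := by revert h; generalize e i = a; revert a; decide
        have : i ∈ S.filter (fun i => e i ≠ 0) ∪ Sᶜ.filter (fun i => e i ≠ 0) := by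
          simp only [Finset.mem_union, Finset.mem_filter, Finset.mem_compl]
          by_cases hiS : i ∈ S
          · exact Or.inl ⟨hiS, h⟩
          · exact Or.inr ⟨hiS, h⟩
        simp only [this, if_true, h1]
      · push_neg at h
        have : i ∉ S.filter (fun i => e i ≠ 0) ∪ Sᶜ.filter (fun i => e i ≠ 0) := by
          simp [h]
        simp only [this, if_false, h]
    · rintro ⟨A, B⟩ hAB
      simp only [Finset.mem_coe, hT, Finset.mem_filter, Finset.mem_product, Finset.mem_powerset] at hAB
      obtain ⟨⟨hA, hB⟩, -, -⟩ := hAB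
      obtain ⟨hAe, hBe⟩ := key A B hA hB
      exact Prod.ext hAe hBe
  rw [step1, Gamma]
  split
  case isTrue h =>
    obtain ⟨h1, h2, h3, h4⟩ := h
    set u := (γ + lam - j) / 2 with hu
    have hu2 : 2 * u = γ + lam - j := by omega
    have hT2 : T = Finset.powersetCard (γ - u) S ×ˢ Finset.powersetCard (lam - u) Sᶜ := by
      ext ⟨A, B⟩
      simp only [hT, Finset.mem_filter, Finset.mem_product, Finset.powersetCard_eq_filter,
        Finset.mem_powerset]
      constructor
      · rintro ⟨⟨hA, hB⟩, e1, e2⟩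
        have hA2 : A.card ≤ γ := hS ▸ Finset.card_le_card hA
        have hB2 : B.card ≤ n - γ := hSc ▸ Finset.card_le_card hB
        refine ⟨⟨hA, by omega⟩, hB, by omega⟩
      · rintro ⟨⟨hA, e1⟩, hB, e2⟩
        refine ⟨⟨hA, hB⟩, by omega, by omega⟩
    rw [hT2, Finset.card_product, Finset.card_powersetCard, Finset.card_powersetCard, hS, hSc]
    congr 1
    exact Nat.choose_symm (by omega)
  case isFalse h =>
    rw [Finset.card_eq_zero]
    by_contra hne
    obtain ⟨⟨A, B⟩, hAB⟩ := Finset.nonempty_iff_ne_empty.mpr hne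
    simp only [hT, Finset.mem_filter, Finset.mem_product, Finset.mem_powerset] at hAB
    obtain ⟨⟨hA, hB⟩, e1, e2⟩ := hAB
    have hA2 : A.card ≤ γ := hS ▸ Finset.card_le_card hA
    have hB2 : B.card ≤ n - γ := hSc ▸ Finset.card_le_card hB
    exact h (by omega)

lemma bern_prod {n : ℕ} (p : ℝ) (e : Fin n → ZMod 2) :
    (∏ i : Fin n, (if e i = 1 then p else 1 - p))
      = p ^ hammingNorm e * (1 - p) ^ (n - hammingNorm e) := by
  rw [Finset.prod_ite, Finset.prod_const, Finset.prod_const]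
  have h1 : (Finset.univ.filter (fun i => e i = 1)).card = hammingNorm e := by
    rw [hammingNorm]
    congr 1
    ext i
    simp only [Finset.mem_filter]
    constructor
    · rintro ⟨h, h2⟩; exact ⟨h, by rw [h2]; decide⟩
    · rintro ⟨h, h2⟩; refine ⟨h, ?_⟩; revert h2; generalize e i = a; revert a; decide
  have h2 : (Finset.univ.filter (fun i => ¬ e i = 1)).card = n - hammingNorm e := by
    have := Finset.card_filter_add_card_filter_not (s := (Finset.univ : Finset (Fin n)))
      (fun i => e i = 1)
    have hcard : (Finset.univ : Finset (Fin n)).card = n := by simp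
    omega
  rw [h1, h2]

lemma sum_over_e {n : ℕ} (lamq : ℕ) (p : ℝ) (γ : ℕ) (x : Fin n → ZMod 2)
    (hx : hammingNorm x = γ) :
    ∑ e ∈ (Finset.univ : Finset (Fin n → ZMod 2)).filter
        (fun e => hammingNorm (x + e) ≤ lamq),
      p ^ hammingNorm e * (1 - p) ^ (n - hammingNorm e)
    = ∑ lam ∈ Finset.range (lamq + 1), ∑ j ∈ Finset.range (n + 1),
        (Gamma n lam j γ : ℝ) * p ^ j * (1 - p) ^ (n - j) := by
  classical
  rw [← Finset.sum_fiberwise_of_maps_to (g := fun e => hammingNorm (x + e))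
      (t := Finset.range (lamq + 1))
      (fun e he => by
        simp only [Finset.mem_filter, Finset.mem_univ, true_and] at he
        exact Finset.mem_range.mpr (Nat.lt_succ_of_le he))]
  refine Finset.sum_congr rfl (fun lam hlam => ?_)
  have hlam' : lam ≤ lamq := by simpa using Nat.lt_succ_iff.mp (Finset.mem_range.mp hlam)
  have hfib : ((Finset.univ : Finset (Fin n → ZMod 2)).filter
        (fun e => hammingNorm (x + e) ≤ lamq)).filter (fun e => hammingNorm (x + e) = lam)
      = (Finset.univ : Finset (Fin n → ZMod 2)).filter (fun e => hammingNorm (x + e) = lam) := by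
    rw [Finset.filter_filter]
    refine Finset.filter_congr (fun e _ => ?_)
    constructor
    · exact And.right
    · intro h; exact ⟨by omega, h⟩
  rw [hfib]
  rw [← Finset.sum_fiberwise_of_maps_to (g := fun e => hammingNorm e)
      (t := Finset.range (n + 1))
      (fun e _ => Finset.mem_range.mpr (Nat.lt_succ_of_le (hn_le n e)))]
  refine Finset.sum_congr rfl (fun j hj => ?_)
  rw [Finset.filter_filter]
  have : ∑ e ∈ (Finset.univ : Finset (Fin n → ZMod 2)).filter
        (fun e => hammingNorm (x + e) = lam ∧ hammingNorm e = j),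
      p ^ hammingNorm e * (1 - p) ^ (n - hammingNorm e)
      = ∑ _e ∈ (Finset.univ : Finset (Fin n → ZMod 2)).filter
        (fun e => hammingNorm (x + e) = lam ∧ hammingNorm e = j),
      p ^ j * (1 - p) ^ (n - j) := by
    refine Finset.sum_congr rfl (fun e he => ?_)
    simp only [Finset.mem_filter] at he
    rw [he.2.2]
  rw [this, Finset.sum_const, count_lemma lam j γ x hx, nsmul_eq_mul]
  ring

lemma prob_sum {Ω : Type*} [MeasurableSpace Ω] (ℙ : Measure Ω) [IsProbabilityMeasure ℙ]
    {α : Type*} [Fintype α] [DecidableEq α]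
    (X E : Ω → α)
    (hXm : ∀ x : α, MeasurableSet {ω | X ω = x})
    (hEm : ∀ e : α, MeasurableSet {ω | E ω = e})
    (P : α → α → Prop) [∀ x e, Decidable (P x e)] :
    (ℙ {ω | P (X ω) (E ω)}).toReal
      = ∑ q ∈ (Finset.univ ×ˢ Finset.univ : Finset (α × α)).filter (fun q => P q.1 q.2),
          (ℙ {ω | X ω = q.1 ∧ E ω = q.2}).toReal := by
  have hmeas : ∀ q : α × α, MeasurableSet {ω | X ω = q.1 ∧ E ω = q.2} := by
    intro q
    have : {ω | X ω = q.1 ∧ E ω = q.2} = {ω | X ω = q.1} ∩ {ω | E ω = q.2} := rfl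
    rw [this]; exact (hXm _).inter (hEm _)
  have hset : {ω | P (X ω) (E ω)}
      = ⋃ q ∈ ((Finset.univ ×ˢ Finset.univ : Finset (α × α)).filter (fun q => P q.1 q.2)),
          {ω | X ω = q.1 ∧ E ω = q.2} := by
    ext ω
    simp only [Set.mem_setOf_eq, Set.mem_iUnion, Finset.mem_filter, Finset.mem_product,
      Finset.mem_univ, true_and, and_true, exists_prop]
    constructor
    · intro h
      exact ⟨(X ω, E ω), h, rfl, rfl⟩
    · rintro ⟨q, hq, h1, h2⟩
      rw [h1, h2]; exact hq
  rw [hset, measure_biUnion_finset ?_ (fun q _ => hmeas q), ENNReal.toReal_sum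
    (fun q _ => measure_ne_top ℙ _)]
  intro q1 _ q2 _ hne
  simp only [Function.onFun, Set.disjoint_left]
  intro ω h1 h2
  apply hne
  simp only [Set.mem_setOf_eq] at h1 h2
  exact Prod.ext (h1.1 ▸ h2.1 ▸ rfl) (h1.2 ▸ h2.2 ▸ rfl)

lemma sum_C {n lamq dmax : ℕ} (p : ℝ) (C : Finset (Fin n → ZMod 2))
    (hdmax : ∀ x ∈ C, hammingNorm x ≤ dmax) :
    ∑ x ∈ C, ∑ lam ∈ Finset.range (lamq + 1), ∑ j ∈ Finset.range (n + 1),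
        (Gamma n lam j (hammingNorm x) : ℝ) * p ^ j * (1 - p) ^ (n - j)
      = ∑ lam ∈ Finset.range (lamq + 1), ∑ γ ∈ Finset.range (dmax + 1),
          ∑ j ∈ Finset.range (n + 1),
            ((C.filter (fun x => hammingNorm x = γ)).card : ℝ)
              * (Gamma n lam j γ : ℝ) * p ^ j * (1 - p) ^ (n - j) := by
  classical
  rw [Finset.sum_comm]
  refine Finset.sum_congr rfl (fun lam _ => ?_)
  rw [← Finset.sum_fiberwise_of_maps_to (g := fun x => hammingNorm x)
      (t := Finset.range (dmax + 1))
      (fun x hx => Finset.mem_range.mpr (Nat.lt_succ_of_le (hdmax x hx)))]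
  refine Finset.sum_congr rfl (fun γ _ => ?_)
  have h1 : ∑ x ∈ C.filter (fun x => hammingNorm x = γ), ∑ j ∈ Finset.range (n + 1),
        (Gamma n lam j (hammingNorm x) : ℝ) * p ^ j * (1 - p) ^ (n - j)
      = ∑ _x ∈ C.filter (fun x => hammingNorm x = γ), ∑ j ∈ Finset.range (n + 1),
        (Gamma n lam j γ : ℝ) * p ^ j * (1 - p) ^ (n - j) := by
    refine Finset.sum_congr rfl (fun x hx => ?_)
    rw [(Finset.mem_filter.mp hx).2]
  rw [h1, Finset.sum_const, nsmul_eq_mul, Finset.mul_sum]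
  refine Finset.sum_congr rfl (fun j _ => ?_)
  ring

lemma main_aux (n : ℕ) (lamq : ℕ) (p : ℝ)
    (C : Finset (Fin n → ZMod 2))
    (dmax : ℕ) (hdmax : ∀ x ∈ C, hammingNorm x ≤ dmax)
    {Ω : Type*} [MeasurableSpace Ω] (ℙ : Measure Ω) [IsProbabilityMeasure ℙ]
    (X E : Ω → (Fin n → ZMod 2))
    (hXm : ∀ x : Fin n → ZMod 2, MeasurableSet {ω | X ω = x})
    (hEm : ∀ e : Fin n → ZMod 2, MeasurableSet {ω | E ω = e})
    (hXunif : ∀ x : Fin n → ZMod 2,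
      (ℙ {ω | X ω = x}).toReal = if x ∈ C then 1 / (C.card : ℝ) else 0)
    (hEdist : ∀ e : Fin n → ZMod 2,
      (ℙ {ω | E ω = e}).toReal = ∏ i : Fin n, (if e i = 1 then p else 1 - p))
    (hindep : ∀ x e : Fin n → ZMod 2,
      (ℙ {ω | X ω = x ∧ E ω = e}).toReal
        = (ℙ {ω | X ω = x}).toReal * (ℙ {ω | E ω = e}).toReal) :
    (ℙ {ω | hammingNorm (X ω + E ω) ≤ lamq}).toReal
      = (1 / (C.card : ℝ)) *
          ∑ lam ∈ Finset.range (lamq + 1), ∑ γ ∈ Finset.range (dmax + 1),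
            ∑ j ∈ Finset.range (n + 1),
              ((C.filter (fun x => hammingNorm x = γ)).card : ℝ) *
                (Gamma n lam j γ : ℝ) * p ^ j * (1 - p) ^ (n - j) := by
  classical
  rw [prob_sum ℙ X E hXm hEm (fun x e => hammingNorm (x + e) ≤ lamq)]
  have step : ∀ q : (Fin n → ZMod 2) × (Fin n → ZMod 2),
      (ℙ {ω | X ω = q.1 ∧ E ω = q.2}).toReal
        = (if q.1 ∈ C then 1 / (C.card : ℝ) else 0)
            * (p ^ hammingNorm q.2 * (1 - p) ^ (n - hammingNorm q.2)) := by
    intro q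
    rw [hindep, hXunif, hEdist, bern_prod]
  simp only [step]
  rw [Finset.sum_filter, Finset.sum_product]
  have step2 : ∀ x : Fin n → ZMod 2,
      (∑ e : Fin n → ZMod 2, if hammingNorm (x + e) ≤ lamq then
          (if x ∈ C then 1 / (C.card : ℝ) else 0)
            * (p ^ hammingNorm e * (1 - p) ^ (n - hammingNorm e)) else 0)
        = (if x ∈ C then 1 / (C.card : ℝ) else 0) *
            ∑ lam ∈ Finset.range (lamq + 1), ∑ j ∈ Finset.range (n + 1),
              (Gamma n lam j (hammingNorm x) : ℝ) * p ^ j * (1 - p) ^ (n - j) := by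
    intro x
    rw [← sum_over_e lamq p (hammingNorm x) x rfl, ← Finset.sum_filter, Finset.mul_sum]
  simp only [step2]
  simp only [ite_mul, zero_mul]
  rw [Finset.sum_ite_mem, Finset.univ_inter, ← Finset.mul_sum,
    sum_C p C hdmax]

lemma meas_PXE {Ω : Type*} [MeasurableSpace Ω] {α : Type*} [Fintype α] [DecidableEq α]
    (X E : Ω → α)
    (hXm : ∀ x : α, MeasurableSet {ω | X ω = x})
    (hEm : ∀ e : α, MeasurableSet {ω | E ω = e})
    (P : α → α → Prop) [∀ x e, Decidable (P x e)] :
    MeasurableSet {ω | P (X ω) (E ω)} := by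
  have hset : {ω | P (X ω) (E ω)}
      = ⋃ q ∈ ((Finset.univ ×ˢ Finset.univ : Finset (α × α)).filter (fun q => P q.1 q.2)),
          {ω | X ω = q.1 ∧ E ω = q.2} := by
    ext ω
    simp only [Set.mem_setOf_eq, Set.mem_iUnion, Finset.mem_filter, Finset.mem_product,
      Finset.mem_univ, true_and, and_true, exists_prop]
    constructor
    · intro h
      exact ⟨(X ω, E ω), h, rfl, rfl⟩
    · rintro ⟨q, hq, h1, h2⟩
      rw [h1, h2]; exact hq
  rw [hset]
  refine Finset.measurableSet_biUnion _ (fun q _ => ?_)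
  have : {ω | X ω = q.1 ∧ E ω = q.2} = {ω | X ω = q.1} ∩ {ω | E ω = q.2} := rfl
  rw [this]; exact (hXm _).inter (hEm _)

/-- Proposition 1, error probabilities of the quantization scheme:
conditioned on the all-zero codeword, `X` is uniform on the decision region `C`
(whose weights are at most `dmax`, with weight enumerator `E_γ^{(q)}`), `Y = X ⊕ E`
with `E` i.i.d. Bernoulli(δ) and independent of `X`, and the decoder decides `H0`
iff `w(Y) ≤ λ_q`.  With `δ = p0` (space `Ω₀`) the Type-I error is
`α = P(w(Y) > λ_q) = 1 − (1/N) ∑_{λ=0}^{λ_q} ∑_{γ=0}^{dmax} ∑_{j=0}^{n} E_γ Γ_{λ,j,γ} p0^j (1-p0)^{n-j}`,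
and with `δ = p1` (space `Ω₁`) the Type-II error is
`β = P(w(Y) ≤ λ_q) = (1/N) ∑_{λ=0}^{λ_q} ∑_{γ=0}^{dmax} ∑_{j=0}^{n} E_γ Γ_{λ,j,γ} p1^j (1-p1)^{n-j}`. -/
theorem quantization_scheme_error_probabilities
    (n : ℕ) (hn : 1 ≤ n) (lamq : ℕ)
    (p0 p1 : ℝ) (hp00 : 0 ≤ p0) (hp01 : p0 ≤ 1) (hp10 : 0 ≤ p1) (hp11 : p1 ≤ 1)
    (C : Finset (Fin n → ZMod 2)) (hC : C.Nonempty)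
    (dmax : ℕ) (hdmax : ∀ x ∈ C, hammingNorm x ≤ dmax)
    {Ω₀ Ω₁ : Type*} [MeasurableSpace Ω₀] [MeasurableSpace Ω₁]
    (ℙ₀ : Measure Ω₀) (ℙ₁ : Measure Ω₁)
    [IsProbabilityMeasure ℙ₀] [IsProbabilityMeasure ℙ₁]
    (X₀ E₀ : Ω₀ → (Fin n → ZMod 2)) (X₁ E₁ : Ω₁ → (Fin n → ZMod 2))
    (hX₀m : ∀ x : Fin n → ZMod 2, MeasurableSet {ω | X₀ ω = x})
    (hE₀m : ∀ e : Fin n → ZMod 2, MeasurableSet {ω | E₀ ω = e})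
    (hX₁m : ∀ x : Fin n → ZMod 2, MeasurableSet {ω | X₁ ω = x})
    (hE₁m : ∀ e : Fin n → ZMod 2, MeasurableSet {ω | E₁ ω = e})
    -- under H0 (noise parameter p0): X₀ uniform on C, E₀ i.i.d. Bernoulli(p0), independence
    (hX₀unif : ∀ x : Fin n → ZMod 2,
      (ℙ₀ {ω | X₀ ω = x}).toReal = if x ∈ C then 1 / (C.card : ℝ) else 0)
    (hE₀dist : ∀ e : Fin n → ZMod 2,
      (ℙ₀ {ω | E₀ ω = e}).toReal = ∏ i : Fin n, (if e i = 1 then p0 else 1 - p0))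
    (hindep₀ : ∀ x e : Fin n → ZMod 2,
      (ℙ₀ {ω | X₀ ω = x ∧ E₀ ω = e}).toReal
        = (ℙ₀ {ω | X₀ ω = x}).toReal * (ℙ₀ {ω | E₀ ω = e}).toReal)
    -- under H1 (noise parameter p1): X₁ uniform on C, E₁ i.i.d. Bernoulli(p1), independence
    (hX₁unif : ∀ x : Fin n → ZMod 2,
      (ℙ₁ {ω | X₁ ω = x}).toReal = if x ∈ C then 1 / (C.card : ℝ) else 0)
    (hE₁dist : ∀ e : Fin n → ZMod 2,
      (ℙ₁ {ω | E₁ ω = e}).toReal = ∏ i : Fin n, (if e i = 1 then p1 else 1 - p1))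
    (hindep₁ : ∀ x e : Fin n → ZMod 2,
      (ℙ₁ {ω | X₁ ω = x ∧ E₁ ω = e}).toReal
        = (ℙ₁ {ω | X₁ ω = x}).toReal * (ℙ₁ {ω | E₁ ω = e}).toReal) :
    -- (i) Type-I error
    (ℙ₀ {ω | ¬ hammingNorm (X₀ ω + E₀ ω) ≤ lamq}).toReal
        = 1 - (1 / (C.card : ℝ)) *
            ∑ lam ∈ Finset.range (lamq + 1), ∑ γ ∈ Finset.range (dmax + 1),
              ∑ j ∈ Finset.range (n + 1),
                ((C.filter (fun x => hammingNorm x = γ)).card : ℝ) *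
                  (Gamma n lam j γ : ℝ) * p0 ^ j * (1 - p0) ^ (n - j)
      ∧
    -- (ii) Type-II error
    (ℙ₁ {ω | hammingNorm (X₁ ω + E₁ ω) ≤ lamq}).toReal
        = (1 / (C.card : ℝ)) *
            ∑ lam ∈ Finset.range (lamq + 1), ∑ γ ∈ Finset.range (dmax + 1),
              ∑ j ∈ Finset.range (n + 1),
                ((C.filter (fun x => hammingNorm x = γ)).card : ℝ) *
                  (Gamma n lam j γ : ℝ) * p1 ^ j * (1 - p1) ^ (n - j) := by
  constructor
  · have hmeas : MeasurableSet {ω | hammingNorm (X₀ ω + E₀ ω) ≤ lamq} :=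
      meas_PXE X₀ E₀ hX₀m hE₀m (fun x e => hammingNorm (x + e) ≤ lamq)
    have hcompl : {ω | ¬ hammingNorm (X₀ ω + E₀ ω) ≤ lamq}
        = {ω | hammingNorm (X₀ ω + E₀ ω) ≤ lamq}ᶜ := rfl
    rw [hcompl, prob_compl_eq_one_sub hmeas,
      ENNReal.toReal_sub_of_le prob_le_one ENNReal.one_ne_top, ENNReal.toReal_one,
      main_aux n lamq p0 C dmax hdmax ℙ₀ X₀ E₀ hX₀m hE₀m hX₀unif hE₀dist hindep₀]
  · exact main_aux n lamq p1 C dmax hdmax ℙ₁ X₁ E₁ hX₁m hE₁m hX₁unif hE₁dist hindep₁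
end
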